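/- Every element of Q is a k-linear combination of images of elements u·z, where z ∈ X ∪ Y and u is a (possibly empty) product of the generators d, l(n,x), r(n,x) with x ∈ X only; that is, Q is spanned by the image of A(X) ⊗ (kX ⊕ kY). (This is the reduction underlying the description of the defining relations of the split null extension C ⊕ M of an associative conformal algebra C by a conformal C-module M.) -/

import Mathlib

set_option maxSynthPendingDepth 3

/-- Generators of the algebra `A(X ∪ Y)` (the disjoint union realized as `X ⊕ Y`). -/
inductive AGen (X : Type*) where
  | d : AGen X
  | l (n : ℕ) (a : X) : AGen X
  | r (n : ℕ) (a : X) : AGen X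

/-- Defining relations of `A(X ∪ Y)`. -/
inductive ARel (k : Type*) [CommRing k] (X : Type*) :
    FreeAlgebra k (AGen X) → FreeAlgebra k (AGen X) → Prop
  | ld (n : ℕ) (a : X) :
      ARel k X (FreeAlgebra.ι k (AGen.l n a) * FreeAlgebra.ι k AGen.d)
        (FreeAlgebra.ι k AGen.d * FreeAlgebra.ι k (AGen.l n a) +
          n • FreeAlgebra.ι k (AGen.l (n - 1) a))
  | rd (n : ℕ) (a : X) :
      ARel k X (FreeAlgebra.ι k (AGen.r n a) * FreeAlgebra.ι k AGen.d)
        (FreeAlgebra.ι k AGen.d * FreeAlgebra.ι k (AGen.r n a) +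
          n • FreeAlgebra.ι k (AGen.r (n - 1) a))
  | rl (n m : ℕ) (a b : X) :
      ARel k X (FreeAlgebra.ι k (AGen.r n a) * FreeAlgebra.ι k (AGen.l m b))
        (FreeAlgebra.ι k (AGen.l m b) * FreeAlgebra.ι k (AGen.r n a))

/-- The algebra `A(X)` presented by the generators `AGen X` and relations `ARel k X`. -/
abbrev AAlg (k : Type*) [CommRing k] (X : Type*) := RingQuot (ARel k X)

/-- The image of a generator in `A(X)`. -/
noncomputable def AAlg.gen (k : Type*) [CommRing k] {X : Type*} (g : AGen X) : AAlg k X :=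
  RingQuot.mkAlgHom k (ARel k X) (FreeAlgebra.ι k g)

/-- The defining relations of the module `Q` over `A(X ∪ Y)`: for all `a b ∈ X ∪ Y`,
`l(n,a)·b` for `n ≥ N(a,b)`, and
`r(m,b)·a − Σ_{s=0}^{N(a,b)−m} (−1)^{m+s}·(1/s!)·d^s·l(m+s,a)·b` for `m ∈ ℕ`
(the sum being empty when `N(a,b) < m`). -/
noncomputable def modRels (k : Type*) [Field k] (X Y : Type*)
    (N : (X ⊕ Y) → (X ⊕ Y) → ℕ) : Set ((X ⊕ Y) →₀ AAlg k (X ⊕ Y)) :=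
  {q | (∃ (n : ℕ) (a b : X ⊕ Y), N a b ≤ n ∧
          q = AAlg.gen k (AGen.l n a) • Finsupp.single b (1 : AAlg k (X ⊕ Y))) ∨
       (∃ (m : ℕ) (a b : X ⊕ Y),
          q = AAlg.gen k (AGen.r m b) • Finsupp.single a (1 : AAlg k (X ⊕ Y)) -
            ∑ s ∈ Finset.range (N a b + 1 - m),
              (((-1 : k) ^ (m + s) * (s.factorial : k)⁻¹) •
                  (AAlg.gen k AGen.d ^ s * AAlg.gen k (AGen.l (m + s) a))) •
                Finsupp.single b (1 : AAlg k (X ⊕ Y)))}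

/-!
`Q` is generated over `A(X ∪ Y)` by the basis elements, so the `k`-span of words in `d` and the
`l(n,a)` applied to basis elements is all of `Q`: it is stable under each `r(m,b)`, because
commuting `r(m,b)` to the right past `d` and the `l`'s only produces lower `r(m',b)`, and the
second relation rewrites `r(m,b)·a` in terms of `d^s l(m+s,a)·b`. Inverting that relation, which
is triangular in `m`, shows likewise that the span of words in `d` and the `r`'s is stable under
every `l(n,a)`; on this span `l(n,y)` acts by zero for `y ∈ Y`, since `l(n,y)·z = 0`. So when a
word in `d` and the `l`'s is applied to a basis element letter by letter, the result stays both
in the span of words in `d` and the `r`'s and in the span of words in `d`, `l(n,x)`, `r(n,x)`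
with `x ∈ X`, and a letter `l(n,y)` kills it.
-/

open Submodule

section WordSpan

variable (k : Type*) {A M ι : Type*} [CommRing k] [Ring A] [AddCommGroup M] [Module A M]
  [Module k M]

def wordSpan (S : Set A) (g : ι → M) : Submodule k M :=
  span k {q | ∃ u ∈ Submonoid.closure S, ∃ i, q = u • g i}

variable {k} {S : Set A} {g : ι → M}

theorem smul_apply_mem_wordSpan {u : A} (hu : u ∈ Submonoid.closure S) (i : ι) :
    u • g i ∈ wordSpan k S g :=
  subset_span ⟨u, hu, i, rfl⟩

theorem apply_mem_wordSpan (i : ι) : g i ∈ wordSpan k S g := by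
  simpa using smul_apply_mem_wordSpan (k := k) (one_mem (Submonoid.closure S)) i

theorem wordSpan_le {V : Submodule k M} (hg : ∀ i, g i ∈ V)
    (hS : ∀ s ∈ S, ∀ v ∈ V, s • v ∈ V) : wordSpan k S g ≤ V := by
  refine span_le.2 ?_
  rintro _ ⟨u, hu, i, rfl⟩
  induction hu using Submonoid.closure_induction_left with
  | one => rw [one_smul]; exact hg i
  | mul_left s hs u _ hu => rw [mul_smul]; exact hS s hs _ hu

variable [Algebra k A] [IsScalarTower k A M]

theorem smul_mem_wordSpan {s : A} (hs : s ∈ Submonoid.closure S) {q : M}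
    (hq : q ∈ wordSpan k S g) : s • q ∈ wordSpan k S g := by
  induction hq using span_induction with
  | mem q hq =>
    obtain ⟨u, hu, i, rfl⟩ := hq
    rw [← mul_smul]
    exact smul_apply_mem_wordSpan (mul_mem hs hu) i
  | zero => rw [smul_zero]; exact zero_mem _
  | add x y _ _ hx hy => rw [smul_add]; exact add_mem hx hy
  | smul c x _ hx => rw [smul_comm]; exact smul_mem _ c hx

theorem smul_mem_of_mem_span {P : Set A} {V : Submodule k M} {x : M}
    (hx : ∀ p ∈ P, p • x ∈ V) {c : A} (hc : c ∈ span k P) : c • x ∈ V := by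
  induction hc using span_induction with
  | mem p hp => exact hx p hp
  | zero => rw [zero_smul]; exact zero_mem _
  | add a b _ _ ha hb => rw [add_smul]; exact add_mem ha hb
  | smul t a _ ha => rw [smul_assoc]; exact smul_mem _ t ha

theorem smul_mem_of_mem_wordSpan_of_commutator_mem {P : Set A} {V : Submodule k M}
    (hV : ∀ s ∈ S, ∀ v ∈ V, s • v ∈ V) (hcomm : ∀ p ∈ P, ∀ s ∈ S, p * s - s * p ∈ span k P)
    (hPg : ∀ p ∈ P, ∀ i, p • g i ∈ V) {p : A} (hp : p ∈ P) {q : M}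
    (hq : q ∈ wordSpan k S g) : p • q ∈ V := by
  have hword : ∀ u ∈ Submonoid.closure S, ∀ i, ∀ p ∈ P, p • u • g i ∈ V := by
    intro u hu i
    induction hu using Submonoid.closure_induction_left with
    | one => simpa only [one_smul] using fun p hp => hPg p hp i
    | mul_left s hs u _ hu =>
      intro p hp
      have hsplit : p • (s * u) • g i = s • p • u • g i + (p * s - s * p) • u • g i := by
        simp only [sub_smul, mul_smul]
        abel
      rw [hsplit]
      exact add_mem (hV s hs _ (hu p hp)) (smul_mem_of_mem_span hu (hcomm p hp s hs))
  induction hq using span_induction with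
  | mem q hq => obtain ⟨u, hu, i, rfl⟩ := hq; exact hword u hu i p hp
  | zero => rw [smul_zero]; exact zero_mem _
  | add x y _ _ hx hy => rw [smul_add]; exact add_mem hx hy
  | smul c x _ hx => rw [smul_comm]; exact smul_mem _ c hx

theorem smul_mem_of_mem_adjoin {T : Set A} {V : Submodule k M}
    (hT : ∀ t ∈ T, ∀ v ∈ V, t • v ∈ V) {a : A} (ha : a ∈ Algebra.adjoin k T) {v : M}
    (hv : v ∈ V) : a • v ∈ V := by
  induction ha using Algebra.adjoin_induction generalizing v with
  | mem t ht => exact hT t ht v hv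
  | algebraMap c => rw [algebraMap_smul]; exact smul_mem _ c hv
  | add a b _ _ ha hb => rw [add_smul]; exact add_mem (ha hv) (hb hv)
  | mul a b _ _ ha hb => rw [mul_smul]; exact ha (hb hv)

theorem eq_top_of_adjoin_eq_top {T : Set A} {G : Set M} {V : Submodule k M}
    (hT : Algebra.adjoin k T = ⊤) (hG : span A G = ⊤) (hTV : ∀ t ∈ T, ∀ v ∈ V, t • v ∈ V)
    (hGV : G ⊆ V) : V = ⊤ := by
  refine eq_top_iff'.2 fun x => ?_
  have hx : x ∈ span A G := hG ▸ mem_top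
  induction hx using span_induction with
  | mem x hx => exact hGV hx
  | zero => exact zero_mem _
  | add x y _ _ hx hy => exact add_mem hx hy
  | smul a x _ hx => exact smul_mem_of_mem_adjoin hTV (hT ▸ Algebra.mem_top) hx

end WordSpan

namespace AAlg

variable (k : Type*) [CommRing k] (W : Type*)

def dlGens : Set (AAlg k W) := {gen k .d} ∪ {x | ∃ n a, x = gen k (.l n a)}

def drGens : Set (AAlg k W) := {gen k .d} ∪ {x | ∃ n a, x = gen k (.r n a)}

def lGens {W : Type*} (a : W) : Set (AAlg k W) := {x | ∃ n, x = gen k (.l n a)}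

def rGens {W : Type*} (a : W) : Set (AAlg k W) := {x | ∃ n, x = gen k (.r n a)}

def inlGens (X Y : Type*) : Set (AAlg k (X ⊕ Y)) :=
  {gen k .d} ∪ {x | ∃ (n : ℕ) (a : X), x = gen k (.l n (.inl a)) ∨ x = gen k (.r n (.inl a))}

variable {W}

theorem gen_l_mul_d_sub (n : ℕ) (a : W) :
    gen k (.l n a) * gen k .d - gen k .d * gen k (.l n a) = n • gen k (.l (n - 1) a) := by
  rw [sub_eq_iff_eq_add']
  simpa [gen] using RingQuot.mkAlgHom_rel k (ARel.ld (k := k) n a)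

theorem gen_r_mul_d_sub (n : ℕ) (a : W) :
    gen k (.r n a) * gen k .d - gen k .d * gen k (.r n a) = n • gen k (.r (n - 1) a) := by
  rw [sub_eq_iff_eq_add']
  simpa [gen] using RingQuot.mkAlgHom_rel k (ARel.rd (k := k) n a)

theorem gen_r_mul_gen_l (n m : ℕ) (a b : W) :
    gen k (.r n a) * gen k (.l m b) = gen k (.l m b) * gen k (.r n a) := by
  simpa [gen] using RingQuot.mkAlgHom_rel k (ARel.rl (k := k) n m a b)

theorem commutator_mem_span_lGens {a : W} {p s : AAlg k W} (hp : p ∈ lGens k a)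
    (hs : s ∈ drGens k W) : p * s - s * p ∈ span k (lGens k a) := by
  obtain ⟨n, rfl⟩ := hp
  obtain rfl | ⟨m, b, rfl⟩ := hs
  · rw [gen_l_mul_d_sub]
    exact nsmul_mem (subset_span (s := lGens k a) ⟨n - 1, rfl⟩) n
  · rw [gen_r_mul_gen_l, sub_self]
    exact zero_mem _

theorem commutator_mem_span_rGens {a : W} {p s : AAlg k W} (hp : p ∈ rGens k a)
    (hs : s ∈ dlGens k W) : p * s - s * p ∈ span k (rGens k a) := by
  obtain ⟨n, rfl⟩ := hp
  obtain rfl | ⟨m, b, rfl⟩ := hs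
  · rw [gen_r_mul_d_sub]
    exact nsmul_mem (subset_span (s := rGens k a) ⟨n - 1, rfl⟩) n
  · rw [gen_r_mul_gen_l, sub_self]
    exact zero_mem _

theorem adjoin_range_gen : Algebra.adjoin k (Set.range (gen k : AGen W → AAlg k W)) = ⊤ := by
  rw [show Set.range (gen k : AGen W → AAlg k W) =
      RingQuot.mkAlgHom k (ARel k W) '' Set.range (FreeAlgebra.ι k) by
    rw [← Set.range_comp]; rfl, ← AlgHom.map_adjoin, FreeAlgebra.adjoin_range_ι,
    Algebra.map_top, AlgHom.range_eq_top]
  exact RingQuot.mkAlgHom_surjective k _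

end AAlg

namespace NullExtension

open AAlg

variable (k : Type*) [Field k] {X Y : Type*} (N : X ⊕ Y → X ⊕ Y → ℕ)

abbrev Q := ((X ⊕ Y) →₀ AAlg k (X ⊕ Y)) ⧸ span (AAlg k (X ⊕ Y)) (modRels k X Y N)

noncomputable def mkSingle (z : X ⊕ Y) : Q k N := Submodule.Quotient.mk (Finsupp.single z 1)

theorem span_range_mkSingle : span (AAlg k (X ⊕ Y)) (Set.range (mkSingle k N)) = ⊤ := by
  rw [show Set.range (mkSingle k N) = (span _ (modRels k X Y N)).mkQ ''
      Set.range (Finsupp.basisSingleOne : Module.Basis _ _ ((X ⊕ Y) →₀ AAlg k (X ⊕ Y))) by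
    rw [← Set.range_comp]; rfl, span_image, Module.Basis.span_eq, Submodule.map_top, range_mkQ]

theorem gen_l_smul_mkSingle_of_le {n : ℕ} {a b : X ⊕ Y} (h : N a b ≤ n) :
    gen k (.l n a) • mkSingle k N b = 0 :=
  (Submodule.Quotient.mk_eq_zero _).2 (subset_span (Or.inl ⟨n, a, b, h, rfl⟩))

theorem gen_r_smul_mkSingle (m : ℕ) (a b : X ⊕ Y) :
    gen k (.r m b) • mkSingle k N a =
      ∑ s ∈ Finset.range (N a b + 1 - m), ((-1 : k) ^ (m + s) * (s.factorial : k)⁻¹) •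
        (gen k .d ^ s * gen k (.l (m + s) a)) • mkSingle k N b := by
  have hrel := (Submodule.Quotient.eq _).2 (subset_span (Or.inr ⟨m, a, b, rfl⟩) :
    _ ∈ span (AAlg k (X ⊕ Y)) (modRels k X Y N))
  rw [← mkQ_apply, ← mkQ_apply, map_sum] at hrel
  simp only [mkQ_apply, Submodule.Quotient.mk_smul, smul_assoc] at hrel
  exact hrel

theorem wordSpan_dlGens_eq_top : wordSpan k (dlGens k (X ⊕ Y)) (mkSingle k N) = ⊤ := by
  have hd : (gen k .d : AAlg k (X ⊕ Y)) ∈ Submonoid.closure (dlGens k (X ⊕ Y)) :=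
    Submonoid.subset_closure (Or.inl rfl)
  have hl (n : ℕ) (a : X ⊕ Y) : gen k (.l n a) ∈ Submonoid.closure (dlGens k (X ⊕ Y)) :=
    Submonoid.subset_closure (Or.inr ⟨n, a, rfl⟩)
  refine eq_top_of_adjoin_eq_top (adjoin_range_gen k) (span_range_mkSingle k N) ?_ ?_
  · rintro _ ⟨g, rfl⟩ v hv
    cases g with
    | d => exact smul_mem_wordSpan hd hv
    | l n a => exact smul_mem_wordSpan (hl n a) hv
    | r n b =>
      refine smul_mem_of_mem_wordSpan_of_commutator_mem (P := rGens k b)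
        (fun s hs v hv => smul_mem_wordSpan (Submonoid.subset_closure hs) hv)
        (fun p hp s hs => commutator_mem_span_rGens k hp hs) ?_ ⟨n, rfl⟩ hv
      rintro _ ⟨m, rfl⟩ a
      rw [gen_r_smul_mkSingle]
      refine sum_mem fun s _ => smul_mem _ _ (smul_apply_mem_wordSpan ?_ b)
      exact mul_mem (pow_mem hd s) (hl (m + s) a)
  · rintro _ ⟨z, rfl⟩
    exact apply_mem_wordSpan z

theorem gen_l_smul_mkSingle_mem_wordSpan_drGens (m : ℕ) (a b : X ⊕ Y) :
    gen k (.l m a) • mkSingle k N b ∈ wordSpan k (drGens k (X ⊕ Y)) (mkSingle k N) := by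
  obtain hle | hlt := le_or_gt (N a b) m
  · rw [gen_l_smul_mkSingle_of_le k N hle]
    exact zero_mem _
  -- the `s = 0` term of the relation for `r(m,b)·a` is `(-1)^m l(m,a)·b`; the other terms have
  -- larger index `m + s` and are handled by recursion on `N a b - m`
  have hrel := gen_r_smul_mkSingle k N m a b
  rw [show N a b + 1 - m = N a b - m + 1 by omega, Finset.sum_range_succ', eq_comm,
    ← eq_sub_iff_add_eq'] at hrel
  simp only [pow_zero, one_mul, add_zero, Nat.factorial_zero, Nat.cast_one, inv_one,
    mul_one] at hrel
  have hd : (gen k .d : AAlg k (X ⊕ Y)) ∈ Submonoid.closure (drGens k (X ⊕ Y)) :=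
    Submonoid.subset_closure (Or.inl rfl)
  have hr : gen k (.r m b) ∈ Submonoid.closure (drGens k (X ⊕ Y)) :=
    Submonoid.subset_closure (Or.inr ⟨m, b, rfl⟩)
  rw [← smul_mem_iff _ (pow_ne_zero m (neg_ne_zero.2 one_ne_zero) : (-1 : k) ^ m ≠ 0), hrel]
  refine sub_mem (smul_apply_mem_wordSpan hr a)
    (sum_mem fun i hi => smul_mem _ _ ?_)
  rw [mul_smul]
  exact smul_mem_wordSpan (pow_mem hd _)
    (gen_l_smul_mkSingle_mem_wordSpan_drGens (m + (i + 1)) a b)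
termination_by N a b - m
decreasing_by
  rw [Finset.mem_range] at hi
  omega

theorem gen_l_smul_mem_wordSpan_drGens (n : ℕ) (a : X ⊕ Y) {q : Q k N}
    (hq : q ∈ wordSpan k (drGens k (X ⊕ Y)) (mkSingle k N)) :
    gen k (.l n a) • q ∈ wordSpan k (drGens k (X ⊕ Y)) (mkSingle k N) :=
  smul_mem_of_mem_wordSpan_of_commutator_mem (P := lGens k a)
    (fun s hs v hv => smul_mem_wordSpan (Submonoid.subset_closure hs) hv)
    (fun p hp s hs => commutator_mem_span_lGens k hp hs)
    (by rintro _ ⟨m, rfl⟩ b; exact gen_l_smul_mkSingle_mem_wordSpan_drGens k N m a b)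
    ⟨n, rfl⟩ hq

theorem gen_l_inr_smul_eq_zero (hN : ∀ (y : Y) (z : X ⊕ Y), N (Sum.inr y) z = 0) (n : ℕ) (y : Y)
    {q : Q k N} (hq : q ∈ wordSpan k (drGens k (X ⊕ Y)) (mkSingle k N)) :
    gen k (.l n (Sum.inr y : X ⊕ Y)) • q = 0 :=
  (mem_bot k).1 <| smul_mem_of_mem_wordSpan_of_commutator_mem (V := ⊥)
    (P := lGens k (Sum.inr y))
    (fun s _ v hv => by rw [mem_bot] at hv ⊢; rw [hv, smul_zero])
    (fun p hp s hs => commutator_mem_span_lGens k hp hs)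
    (by
      rintro _ ⟨m, rfl⟩ z
      rw [gen_l_smul_mkSingle_of_le k N (by rw [hN]; exact Nat.zero_le m)]
      exact zero_mem _)
    ⟨n, rfl⟩ hq

theorem wordSpan_dlGens_le_inf (hN : ∀ (y : Y) (z : X ⊕ Y), N (Sum.inr y) z = 0) :
    wordSpan k (dlGens k (X ⊕ Y)) (mkSingle k N) ≤
      wordSpan k (inlGens k X Y) (mkSingle k N) ⊓
        wordSpan k (drGens k (X ⊕ Y)) (mkSingle k N) := by
  refine wordSpan_le (fun z => ⟨apply_mem_wordSpan z, apply_mem_wordSpan z⟩) ?_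
  rintro _ (rfl | ⟨n, a | y, rfl⟩) v ⟨hvX, hvR⟩
  · exact ⟨smul_mem_wordSpan (S := inlGens k X Y) (Submonoid.subset_closure (Or.inl rfl)) hvX,
      smul_mem_wordSpan (S := drGens k _) (Submonoid.subset_closure (Or.inl rfl)) hvR⟩
  · exact ⟨smul_mem_wordSpan (S := inlGens k X Y)
      (Submonoid.subset_closure (Or.inr ⟨n, a, Or.inl rfl⟩)) hvX,
      gen_l_smul_mem_wordSpan_drGens k N n _ hvR⟩
  · rw [gen_l_inr_smul_eq_zero k N hN n y hvR]
    exact zero_mem _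

end NullExtension

theorem null_extension_reduction_general (k : Type*) [Field k] (X Y : Type*)
    (N : (X ⊕ Y) → (X ⊕ Y) → ℕ) (hN : ∀ (y : Y) (z : X ⊕ Y), N (Sum.inr y) z = 0) :
    Submodule.span k
      {q : ((X ⊕ Y) →₀ AAlg k (X ⊕ Y)) ⧸ Submodule.span (AAlg k (X ⊕ Y)) (modRels k X Y N) |
        ∃ u ∈ Submonoid.closure
            ({AAlg.gen k AGen.d} ∪
              {x : AAlg k (X ⊕ Y) | ∃ (n : ℕ) (a : X),
                x = AAlg.gen k (AGen.l n (Sum.inl a)) ∨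
                x = AAlg.gen k (AGen.r n (Sum.inl a))}),
          ∃ z : X ⊕ Y,
            q = Submodule.Quotient.mk (u • Finsupp.single z (1 : AAlg k (X ⊕ Y)))} = ⊤ := by
  rw [eq_top_iff, ← NullExtension.wordSpan_dlGens_eq_top k N]
  refine (NullExtension.wordSpan_dlGens_le_inf k N hN).trans (inf_le_left.trans (span_mono ?_))
  rintro _ ⟨u, hu, z, rfl⟩
  exact ⟨u, hu, z, (Submodule.Quotient.mk_smul _ _ _).symm⟩

/-- Let `X`, `Y` be disjoint sets, `N` a locality function with `N(y,z) = 0` for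
`y ∈ Y`, and `Q` the quotient of the free `A(X ∪ Y)`-module with basis `X ∪ Y` by the
submodule generated by `modRels`.  Then every element of `Q` is a `k`-linear combination of
images of elements `u·z`, where `z ∈ X ∪ Y` and `u` is a (possibly empty) product of the
generators `d`, `l(n,x)`, `r(n,x)` with `x ∈ X` only; that is, `Q` is spanned by the image of
`A(X) ⊗ (kX ⊕ kY)`. -/
theorem null_extension_reduction (k : Type*) [Field k] [CharZero k] (X Y : Type*)
    (N : (X ⊕ Y) → (X ⊕ Y) → ℕ) (hN : ∀ (y : Y) (z : X ⊕ Y), N (Sum.inr y) z = 0) :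
    Submodule.span k
      {q : ((X ⊕ Y) →₀ AAlg k (X ⊕ Y)) ⧸ Submodule.span (AAlg k (X ⊕ Y)) (modRels k X Y N) |
        ∃ u ∈ Submonoid.closure
            ({AAlg.gen k AGen.d} ∪
              {x : AAlg k (X ⊕ Y) | ∃ (n : ℕ) (a : X),
                x = AAlg.gen k (AGen.l n (Sum.inl a)) ∨
                x = AAlg.gen k (AGen.r n (Sum.inl a))}),
          ∃ z : X ⊕ Y,
            q = Submodule.Quotient.mk (u • Finsupp.single z (1 : AAlg k (X ⊕ Y)))} = ⊤ :=
  null_extension_reduction_general k X Y N hN
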